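/- arXiv:1810.07166 — 5 statements merged into one kernel-verified Lean document; each statement's English description precedes it below -/
import Mathlib

section
/- Let s ≥ 5 be an integer, k an integer with 1 ≤ k ≤ 4s, and let r and σ be positive integers such that r > k/(2s), σ > k/4, and r·σ < k²/(8s) + 1. Then r = ⌊k/(2s)⌋ + 1 and σ = ⌊k/4⌋ + 1, i.e. r is the smallest integer strictly greater than k/(2s) and σ is the smallest integer strictly greater than k/4. -/
/-!
Write `x = k/(2s)` and `y = k/4`, so that `k²/(8s) = x y`. If an integer `r > x` were not the least
one, then `r > x + 1`; since also `σ ≥ max 1 y`, this gives `r σ > (x + 1) max 1 y ≥ x y + 1`.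
The same argument with the roles exchanged pins down `σ`.
-/

theorem Int.eq_floor_add_one_of_mul_lt_mul_add_one {K : Type*} [Field K] [LinearOrder K]
    [IsStrictOrderedRing K] [FloorRing K] {x y : K} {r σ : ℤ} (hx : 0 ≤ x) (hσ0 : 0 < σ)
    (hr : x < r) (hσ : y < σ) (hrσ : (r : K) * σ < x * y + 1) :
    r = ⌊x⌋ + 1 := by
  have h_floor_lt : ⌊x⌋ < r := Int.floor_lt.mpr hr
  by_contra hne
  have h_add_one_lt : x + 1 < r := by
    have h_two : ⌊x⌋ + 2 ≤ r := by omega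
    have h_two' : (⌊x⌋ : K) + 2 ≤ r := by exact_mod_cast h_two
    linarith [Int.lt_floor_add_one x]
  have h_max_le : max 1 y ≤ (σ : K) :=
    max_le (by exact_mod_cast hσ0) hσ.le
  have hσ0' : (0 : K) < σ := by exact_mod_cast hσ0
  have : x * y + 1 < r * σ :=
    calc x * y + 1 ≤ (x + 1) * max 1 y := by
          nlinarith [le_max_left 1 y, le_max_right 1 y]
      _ ≤ (x + 1) * σ := by gcongr
      _ < r * σ := by gcongr
  linarith

theorem stmt_1_general (s k : ℤ) (r σ : ℤ)
    (hk1 : 1 ≤ k)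
    (hr0 : 0 < r) (hσ0 : 0 < σ)
    (hr : (k : ℚ) / (2 * s) < (r : ℚ))
    (hσ : (k : ℚ) / 4 < (σ : ℚ))
    (hrσ : (r : ℚ) * (σ : ℚ) < (k : ℚ) ^ 2 / (8 * s) + 1) :
    r = ⌊(k : ℚ) / (2 * s)⌋ + 1 ∧ σ = ⌊(k : ℚ) / 4⌋ + 1 := by
  have hxy : (k : ℚ) ^ 2 / (8 * s) = k / (2 * s) * (k / 4) := by ring
  rw [hxy] at hrσ
  have hy : (0 : ℚ) < k / 4 := by
    have : (1 : ℚ) ≤ k := by exact_mod_cast hk1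
    positivity
  have hx : (0 : ℚ) < k / (2 * s) := by
    have : (1 : ℚ) ≤ r * σ := by exact_mod_cast (Int.mul_pos hr0 hσ0 : (1 : ℤ) ≤ r * σ)
    exact pos_of_mul_pos_left (by linarith) hy.le
  refine ⟨Int.eq_floor_add_one_of_mul_lt_mul_add_one hx.le hσ0 hr hσ hrσ, ?_⟩
  rw [mul_comm, mul_comm (k / (2 * s) : ℚ)] at hrσ
  exact Int.eq_floor_add_one_of_mul_lt_mul_add_one hy.le hr0 hσ hr hrσ

theorem stmt_1 (s k : ℤ) (r σ : ℤ) (hs : 5 ≤ s)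
    (hk1 : 1 ≤ k) (hk2 : k ≤ 4 * s)
    (hr0 : 0 < r) (hσ0 : 0 < σ)
    (hr : (k : ℚ) / (2 * s) < (r : ℚ))
    (hσ : (k : ℚ) / 4 < (σ : ℚ))
    (hrσ : (r : ℚ) * (σ : ℚ) < (k : ℚ) ^ 2 / (8 * s) + 1) :
    r = ⌊(k : ℚ) / (2 * s)⌋ + 1 ∧ σ = ⌊(k : ℚ) / 4⌋ + 1 :=
  stmt_1_general s k r σ hk1 hr0 hσ0 hr hσ hrσ
end

section
/- Let s ≥ 5 be an odd integer, and let a, b be integers with 1 ≤ a ≤ 4, 1 ≤ b ≤ 2s, b ≡ a + 2 (mod 4), a·s > 4b, and b² − 2bs + 2(4 − a)s > 0. Then (a, b) = (3, 1) or (a, b) = (1, 3). -/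
/-!
Put `c = b - (4 - a)`, so that the quadratic equals `b² - 2sc`. When `c > 0`, the slope condition
`a s > 4b` gives `a (b² - 2sc) < b (a b - 8c) = b (8 (4 - a) - (8 - a) b)`, which is `≤ 0` as soon as
`(8 - a) b ≥ 8 (4 - a)`. The congruence `b ≡ a + 2 (mod 4)` forces both `c > 0` and this bound,
except for `(a, b) = (3, 1)` and `(1, 3)`.
-/

def wallQuadratic (a b s : ℤ) : ℤ := b ^ 2 - 2 * b * s + 2 * (4 - a) * s

theorem wallQuadratic_neg {a b s : ℤ} (ha : 0 < a) (hb : 0 ≤ b) (hslope : 4 * b < a * s)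
    (hc : 4 - a < b) (hbound : 8 * (4 - a) ≤ (8 - a) * b) : wallQuadratic a b s < 0 := by
  have hdiff : 8 * b * (b - (4 - a)) < 2 * (a * s) * (b - (4 - a)) := by
    linarith [mul_lt_mul_of_pos_right hslope (sub_pos.mpr hc)]
  have hscaled : a * wallQuadratic a b s < b * (8 * (4 - a) - (8 - a) * b) := by
    unfold wallQuadratic
    linear_combination hdiff
  have hrhs : b * (8 * (4 - a) - (8 - a) * b) ≤ 0 :=
    mul_nonpos_of_nonneg_of_nonpos hb (by linarith)
  exact neg_of_mul_neg_right (hscaled.trans_le hrhs) ha.le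

theorem lt_and_le_of_modEq {a b : ℤ} (ha1 : 1 ≤ a) (ha4 : a ≤ 4) (hb1 : 1 ≤ b)
    (hcong : b ≡ a + 2 [ZMOD 4]) (hne : ¬((a = 3 ∧ b = 1) ∨ (a = 1 ∧ b = 3))) :
    4 - a < b ∧ 8 * (4 - a) ≤ (8 - a) * b := by
  have hmod : b % 4 = (a + 2) % 4 := hcong
  interval_cases a <;> omega

theorem stmt_3_general (s a b : ℤ)
    (ha1 : 1 ≤ a) (ha4 : a ≤ 4) (hb1 : 1 ≤ b)
    (hcong : b ≡ a + 2 [ZMOD 4]) (hslope : 4 * b < a * s)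
    (hineq : 0 < b ^ 2 - 2 * b * s + 2 * (4 - a) * s) :
    (a = 3 ∧ b = 1) ∨ (a = 1 ∧ b = 3) := by
  by_contra hne
  obtain ⟨hc, hbound⟩ := lt_and_le_of_modEq ha1 ha4 hb1 hcong hne
  have hneg := wallQuadratic_neg (by omega) (by omega) hslope hc hbound
  exact hneg.not_gt hineq

theorem stmt_3 (s a b : ℤ) (hs : 5 ≤ s) (hsodd : Odd s)
    (ha1 : 1 ≤ a) (ha4 : a ≤ 4) (hb1 : 1 ≤ b) (hb2 : b ≤ 2 * s)
    (hcong : b ≡ a + 2 [ZMOD 4]) (hslope : 4 * b < a * s)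
    (hineq : 0 < b ^ 2 - 2 * b * s + 2 * (4 - a) * s) :
    (a = 3 ∧ b = 1) ∨ (a = 1 ∧ b = 3) :=
  stmt_3_general s a b ha1 ha4 hb1 hcong hslope hineq
end

section
/- Let s ≥ 6 be an even integer, and let k, a, b be integers with 1 ≤ a ≤ 4, 1 ≤ b ≤ 2s, 1 ≤ k ≤ 4s, k ≡ −a (mod 4), k ≡ −b (mod 2s), a·s > 4b, and (k + a)(k + b) < k² + 8s. Then (k, a, b) is one of (4s − 1, 1, 1), (2s − 1, 1, 1), (2s − 2, 2, 2). -/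
/-!
Writing the destabilizing inequality as `k (a + b) + a b < 8 s`, the congruence modulo `2 s`
forces `k + b ∈ {2 s, 4 s}`, because the slope condition gives `b < s` and hence
`k + b < 5 s`. Since `s` is even, the two congruences together give `a ≡ b [ZMOD 4]`.
If `k + b = 4 s` then `k > 3 s` and only `a = b = 1` survives; if `k + b = 2 s` the inequality
becomes `2 s (a + b - 4) < b² < s b`, so `2 a + b < 8`, and of the candidates
`(1, 1), (2, 2), (1, 5)` allowed modulo 4 the last one violates the slope condition.
-/

namespace Int

lemma lt_of_four_mul_lt_mul {a b s : ℤ} (ha0 : 0 ≤ a) (ha4 : a ≤ 4) (hb : 0 ≤ b)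
    (h : 4 * b < a * s) : b < s := by
  nlinarith

lemma eq_or_eq_two_mul_of_dvd_of_lt_three_mul {m x : ℤ} (hdvd : m ∣ x) (hx : 0 < x)
    (hx3 : x < 3 * m) : x = m ∨ x = 2 * m := by
  obtain ⟨n, rfl⟩ := hdvd
  have hm : 0 < m := by nlinarith
  have hn0 : 0 < n := pos_of_mul_pos_right hx hm.le
  have hn3 : n < 3 := by nlinarith
  interval_cases n <;> simp [mul_comm]

end Int

section Destabilizer

variable {s k a b : ℤ}

lemma destabilizer_eq_of_add_eq_four_mul (ha : 0 < a) (hb : 0 < b) (hbs : b < s)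
    (hineq : (k + a) * (k + b) < k ^ 2 + 8 * s) (hk : k + b = 4 * s) : a = 1 ∧ b = 1 := by
  have hab : a + b < 3 := by nlinarith
  omega

lemma destabilizer_eq_of_add_eq_two_mul (ha1 : 1 ≤ a) (ha4 : a ≤ 4) (hb : 1 ≤ b)
    (hab : a ≡ b [ZMOD 4]) (hslope : 4 * b < a * s)
    (hineq : (k + a) * (k + b) < k ^ 2 + 8 * s) (hk : k + b = 2 * s) :
    (a = 1 ∧ b = 1) ∨ (a = 2 ∧ b = 2) := by
  have hbs : b < s := Int.lt_of_four_mul_lt_mul (by omega) ha4 (by omega) hslope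
  have hreduced : 2 * s * (a + b - 4) < b ^ 2 := by
    have : k = 2 * s - b := by omega
    subst this
    nlinarith
  have h2ab : 2 * a + b < 8 := by nlinarith
  have hcases : (a = 1 ∧ b = 1) ∨ (a = 2 ∧ b = 2) ∨ (a = 1 ∧ b = 5) := by
    unfold Int.ModEq at hab
    omega
  rcases hcases with h | h | ⟨rfl, rfl⟩
  · exact Or.inl h
  · exact Or.inr h
  · nlinarith

end Destabilizer

theorem stmt_4_general (s k a b : ℤ) (hsev : Even s)
    (ha1 : 1 ≤ a) (ha4 : a ≤ 4) (hb1 : 1 ≤ b)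
    (hk1 : 1 ≤ k) (hk2 : k ≤ 4 * s)
    (hcong4 : k ≡ -a [ZMOD 4]) (hcong2s : k ≡ -b [ZMOD (2 * s)])
    (hslope : 4 * b < a * s)
    (hineq : (k + a) * (k + b) < k ^ 2 + 8 * s) :
    (k = 4 * s - 1 ∧ a = 1 ∧ b = 1) ∨
    (k = 2 * s - 1 ∧ a = 1 ∧ b = 1) ∨
    (k = 2 * s - 2 ∧ a = 2 ∧ b = 2) := by
  have hbs : b < s := Int.lt_of_four_mul_lt_mul (by omega) ha4 (by omega) hslope
  have hdvd : 2 * s ∣ k + b := by simpa using hcong2s.symm.dvd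
  rcases Int.eq_or_eq_two_mul_of_dvd_of_lt_three_mul hdvd (by omega) (by omega) with hk | hk
  · have hab : a ≡ b [ZMOD 4] := by
      have h4 : (4 : ℤ) ∣ 2 * s := by
        obtain ⟨t, rfl⟩ := hsev
        exact ⟨t, by ring⟩
      simpa using ((hcong4.symm.trans (hcong2s.of_dvd h4)).neg)
    rcases destabilizer_eq_of_add_eq_two_mul ha1 ha4 hb1 hab hslope hineq hk with
      ⟨rfl, rfl⟩ | ⟨rfl, rfl⟩
    · right; left; omega
    · right; right; omega
  · obtain ⟨rfl, rfl⟩ :=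
      destabilizer_eq_of_add_eq_four_mul (by omega) (by omega) hbs hineq (by omega)
    left; omega

theorem stmt_4 (s k a b : ℤ) (hs : 6 ≤ s) (hsev : Even s)
    (ha1 : 1 ≤ a) (ha4 : a ≤ 4) (hb1 : 1 ≤ b) (hb2 : b ≤ 2 * s)
    (hk1 : 1 ≤ k) (hk2 : k ≤ 4 * s)
    (hcong4 : k ≡ -a [ZMOD 4]) (hcong2s : k ≡ -b [ZMOD (2 * s)])
    (hslope : 4 * b < a * s)
    (hineq : (k + a) * (k + b) < k ^ 2 + 8 * s) :
    (k = 4 * s - 1 ∧ a = 1 ∧ b = 1) ∨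
    (k = 2 * s - 1 ∧ a = 1 ∧ b = 1) ∨
    (k = 2 * s - 2 ∧ a = 2 ∧ b = 2) :=
  stmt_4_general s k a b hsev ha1 ha4 hb1 hk1 hk2 hcong4 hcong2s hslope hineq
end

section
/- Let s ≥ 5 be an odd integer, and let k, a, b be integers with 1 ≤ a ≤ 4, 1 ≤ b ≤ 2s, 1 ≤ k ≤ 4s, k ≡ −a (mod 4), k ≡ −b (mod 2s), a·s > 4b, and (k + a)(k + b) < k² + 8s. Then (k, a, b) is one of (4s − 1, 1, 1), (2s − 1, 3, 1), (2s − 3, 1, 3). -/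
/-!
The congruence modulo `2s` and the ranges of `k` and `b` force `k + b ∈ {2s, 4s, 6s}`, while the
slope condition gives `b < s`. Expanded, the inequality reads `(a + b) k + a b < 8s`. If
`k + b = 6s` then `k > 4s`; if `k + b = 4s` then `k > 3s` forces `a + b ≤ 2`; if `k + b = 2s`
then `k > s` forces `a + b ≤ 7`, and since `2s ≡ 2 [ZMOD 4]` for odd `s`, the congruence
modulo `4` leaves only `a - b ≡ 2 [ZMOD 4]`: the pairs `(3, 1)`, `(1, 3)`, and `(4, 2)`, `(2, 4)`,
which the inequality excludes once `s ≥ 5`.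
-/

theorem add_mul_add_lt_sq_add_iff (k a b N : ℤ) :
    (k + a) * (k + b) < k ^ 2 + N ↔ (a + b) * k + a * b < N := by
  constructor <;> intro h <;> linarith [show (k + a) * (k + b) = k ^ 2 + (a + b) * k + a * b by ring]

theorem Int.eq_or_eq_two_mul_or_eq_three_mul_of_dvd {n x : ℤ} (hn : 0 < n) (hdvd : n ∣ x)
    (hpos : 0 < x) (hle : x ≤ 3 * n) : x = n ∨ x = 2 * n ∨ x = 3 * n := by
  obtain ⟨m, rfl⟩ := hdvd
  have hm1 : 1 ≤ m := by nlinarith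
  have hm3 : m ≤ 3 := by nlinarith
  interval_cases m <;> omega

theorem lt_of_mul_lt_mul_of_mul_lt {x k c s N : ℤ} (hx : 0 ≤ x) (hs : 0 < s) (hk : c * s < k)
    (h : x * k < N * s) : x * c < N := by
  by_contra! hN
  nlinarith [mul_le_mul_of_nonneg_left hk.le hx]

section Classification

variable {s k a b : ℤ}

theorem eq_of_add_eq_four_mul (hs : 0 < s) (ha : 1 ≤ a) (hb : 1 ≤ b) (hbs : b < s)
    (hkb : k + b = 4 * s) (hkey : (a + b) * k + a * b < 8 * s) :
    k = 4 * s - 1 ∧ a = 1 ∧ b = 1 := by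
  have hab : (a + b) * 3 < 8 :=
    lt_of_mul_lt_mul_of_mul_lt (k := k) (by omega) hs (by omega) (by nlinarith)
  omega

theorem eq_of_add_eq_two_mul (hs : 5 ≤ s) (hsodd : Odd s) (ha1 : 1 ≤ a) (ha4 : a ≤ 4)
    (hb : 1 ≤ b) (hbs : b < s) (hkb : k + b = 2 * s) (hcong4 : k ≡ -a [ZMOD 4])
    (hkey : (a + b) * k + a * b < 8 * s) :
    (k = 2 * s - 1 ∧ a = 3 ∧ b = 1) ∨ (k = 2 * s - 3 ∧ a = 1 ∧ b = 3) := by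
  have hab : (a + b) * 1 < 8 :=
    lt_of_mul_lt_mul_of_mul_lt (k := k) (s := s) (by omega) (by omega) (by omega) (by nlinarith)
  have hb7 : b ≤ 6 := by omega
  obtain ⟨t, rfl⟩ := hsodd
  have hmod : (a - b) % 4 = 2 := by
    have := Int.ModEq.dvd hcong4
    omega
  obtain rfl : k = 2 * (2 * t + 1) - b := by omega
  interval_cases a <;> interval_cases b <;> omega

end Classification

theorem stmt_5 (s k a b : ℤ) (hs : 5 ≤ s) (hsodd : Odd s)
    (ha1 : 1 ≤ a) (ha4 : a ≤ 4) (hb1 : 1 ≤ b) (hb2 : b ≤ 2 * s)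
    (hk1 : 1 ≤ k) (hk2 : k ≤ 4 * s)
    (hcong4 : k ≡ -a [ZMOD 4]) (hcong2s : k ≡ -b [ZMOD (2 * s)])
    (hslope : 4 * b < a * s)
    (hineq : (k + a) * (k + b) < k ^ 2 + 8 * s) :
    (k = 4 * s - 1 ∧ a = 1 ∧ b = 1) ∨
    (k = 2 * s - 1 ∧ a = 3 ∧ b = 1) ∨
    (k = 2 * s - 3 ∧ a = 1 ∧ b = 3) := by
  have hbs : b < s := by nlinarith
  have hkey := (add_mul_add_lt_sq_add_iff k a b (8 * s)).1 hineq
  have hdvd : 2 * s ∣ k + b := by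
    simpa [sub_neg_eq_add] using Int.ModEq.dvd hcong2s.symm
  rcases Int.eq_or_eq_two_mul_or_eq_three_mul_of_dvd (by omega) hdvd (by omega) (by omega)
    with hkb | hkb | hkb
  · exact Or.inr (eq_of_add_eq_two_mul hs hsodd ha1 ha4 hb1 hbs hkb hcong4 hkey)
  · exact Or.inl (eq_of_add_eq_four_mul (by omega) ha1 hb1 hbs (by omega) hkey)
  · omega
end

section
/- Let s ≥ 5 be an integer, and let α, β be real numbers with α > 0, β > 0, such that (s − 2)β ∈ ℤ, 4sβ ∈ ℤ, and r := α + 2β is a (positive) integer. Then α(r + sβ) > 1, i.e. α(α + 2β + sβ) > 1. -/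
/-!
Put `a = 4α` and `b = 8β`. The hypotheses make `a` and `b` positive integers with
`4 ∣ a + b` and `8 ∣ b (s - 2)`, and the claim becomes `32 < a (2a + (s + 2) b)`.
This holds outright once `a ≥ 3`; for `a = 2` the congruence forces `b ≥ 2`, and for
`a = 1` it forces `b ≥ 3` odd, so `8 ∣ s - 2` and hence `s ≥ 10`.
-/

theorem thirty_two_lt_of_four_dvd_add_of_eight_dvd_mul (a b s : ℤ) (ha : 0 < a)
    (hb : 0 < b) (hs : 5 ≤ s) (hab : 4 ∣ a + b) (hbs : 8 ∣ b * (s - 2)) :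
    32 < a * (2 * a + (s + 2) * b) := by
  obtain ha3 | ha3 := le_or_gt 3 a
  · have hsb : 7 ≤ (s + 2) * b := by nlinarith
    nlinarith
  interval_cases a
  · have hb_odd : Odd b := Int.odd_iff.mpr (by omega)
    have hs_dvd : 8 ∣ s - 2 :=
      ((Int.isCoprime_two_left.mpr hb_odd).pow_left (m := 3)).dvd_of_dvd_mul_left hbs
    have hb3 : 3 ≤ b := by omega
    have hs10 : 10 ≤ s := by omega
    nlinarith
  · have hb2 : 2 ≤ b := by omega
    nlinarith

theorem stmt_7 (s : ℤ) (hs : 5 ≤ s) (α β : ℝ)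
    (hα : 0 < α) (hβ : 0 < β)
    (h1 : ∃ m : ℤ, ((s : ℝ) - 2) * β = m)
    (h2 : ∃ n : ℤ, 4 * (s : ℝ) * β = n)
    (h3 : ∃ r : ℤ, α + 2 * β = r) :
    α * (α + 2 * β + (s : ℝ) * β) > 1 := by
  obtain ⟨m, hm⟩ := h1
  obtain ⟨n, hn⟩ := h2
  obtain ⟨r, hr⟩ := h3
  have hb : ((n - 4 * m : ℤ) : ℝ) = 8 * β := by push_cast; rw [← hn, ← hm]; ring
  have ha : ((4 * r - (n - 4 * m) : ℤ) : ℝ) = 4 * α := by push_cast at hb ⊢; rw [hb, ← hr]; ring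
  generalize n - 4 * m = b at hb ha
  generalize 4 * r - b = a at ha
  have hb0 : 0 < b := by exact_mod_cast (show (0 : ℝ) < b by linarith)
  have ha0 : 0 < a := by exact_mod_cast (show (0 : ℝ) < a by linarith)
  have hab : 4 ∣ a + b := ⟨r, by exact_mod_cast (show (a + b : ℝ) = 4 * r by linarith)⟩
  have hbs : 8 ∣ b * (s - 2) :=
    ⟨m, by exact_mod_cast (show (b * (s - 2) : ℝ) = 8 * m by rw [hb, ← hm]; ring)⟩
  have key : (32 : ℝ) < a * (2 * a + (s + 2) * b) := by
    exact_mod_cast thirty_two_lt_of_four_dvd_add_of_eight_dvd_mul a b s ha0 hb0 hs hab hbs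
  rw [ha, hb] at key
  nlinarith
end
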